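/- Let C be a set and S a cocomplete symmetric monoidal category whose tensor product distributes over colimits. For any object A of S^C (viewed as a C-collection concentrated in level 0), the functor (−) ∘ A : Coll_C(S) → S^C given by the composite product with A admits a right adjoint End_{A,−}, where End_{A,B}(c₁,...,cₙ;c) = Map_S(A(c₁) ⊗ ⋯ ⊗ A(cₙ), B(c)) with symmetric group action by permuting tensor factors. -/

import Mathlib

/-!
STATEMENT 4: For a set of colours `C` and (a cocomplete closed symmetric monoidal category
modelled here by) `S = Type u`, and an object `A ∈ S^C` viewed as a `C`-collection
concentrated in level 0, the composite-product functor `(−) ∘ A : Coll_C(S) → S^C` is left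
adjoint to the endomorphism construction `End_{A,−}`, where
`End_{A,B}(c₁,…,cₙ;c) = Map_S(A c₁ ⊗ ⋯ ⊗ A cₙ, B c)` with the symmetric group acting by
permuting the tensor factors.  The adjunction is stated as a hom-set bijection natural in
both variables.
-/

universe u

/-- A symmetric `C`-collection in `Type u`: objects `M(c₁,…,cₙ;c)` together with the
right `Σₙ`-actions `σ* : M(c₁,…,cₙ;c) → M(c_{σ(1)},…,c_{σ(n)};c)`. -/
structure Coll (C : Type u) : Type (u + 1) where
  obj : ∀ n : ℕ, (Fin n → C) → C → Type u
  act : ∀ {n : ℕ} (σ : Equiv.Perm (Fin n)) {cs : Fin n → C} {c : C},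
    obj n cs c → obj n (cs ∘ σ) c

/-- A morphism of `C`-collections: a levelwise map commuting with the symmetric actions. -/
structure CollHom {C : Type u} (M N : Coll C) : Type u where
  app : ∀ {n : ℕ} {cs : Fin n → C} {c : C}, M.obj n cs c → N.obj n cs c
  equivariant : ∀ {n : ℕ} (σ : Equiv.Perm (Fin n)) {cs : Fin n → C} {c : C}
    (x : M.obj n cs c), app (M.act σ x) = N.act σ (app x)

/-- Composition of collection morphisms. -/
def CollHom.comp {C : Type u} {M N K : Coll C} (g : CollHom N K) (f : CollHom M N) :
    CollHom M K where
  app x := g.app (f.app x)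
  equivariant := by intro n σ cs c x; simp only [f.equivariant, g.equivariant]

/-- The underlying type of the composite product `M ∘ A` (before dividing out the
symmetric group actions), for `A ∈ S^C` concentrated in level 0. -/
def CompPre {C : Type u} (M : Coll C) (A : C → Type u) (c : C) : Type u :=
  Σ n : ℕ, Σ cs : Fin n → C, M.obj n cs c × ∀ i, A (cs i)

/-- The relation dividing out the symmetric group actions in the coend defining `M ∘ A`. -/
inductive CollCompRel {C : Type u} (M : Coll C) (A : C → Type u) (c : C) :
    CompPre M A c → CompPre M A c → Prop
  | mk {n : ℕ} (cs : Fin n → C) (x : M.obj n cs c) (a : ∀ i, A (cs i))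
      (σ : Equiv.Perm (Fin n)) :
      CollCompRel M A c ⟨n, cs, x, a⟩ ⟨n, cs ∘ σ, M.act σ x, fun i => a (σ i)⟩

/-- The composite product `(M ∘ A)(c) = ⨿ₙ M(c₁,…,cₙ;c) ⊗_{Σₙ} (A c₁ ⊗ ⋯ ⊗ A cₙ)`. -/
def CompProd {C : Type u} (M : Coll C) (A : C → Type u) (c : C) : Type u :=
  Quot (CollCompRel M A c)

/-- Functoriality of `(−) ∘ A` in the collection variable. -/
def compMap {C : Type u} {M N : Coll C} (g : CollHom M N) (A : C → Type u) (c : C) :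
    CompProd M A c → CompProd N A c :=
  Quot.map (fun p => ⟨p.1, p.2.1, g.app p.2.2.1, p.2.2.2⟩)
    (by
      rintro _ _ ⟨cs, x, a, σ⟩
      show CollCompRel N A c ⟨_, cs, g.app x, a⟩ ⟨_, cs ∘ σ, g.app (M.act σ x), fun i => a (σ i)⟩
      rw [g.equivariant]
      exact CollCompRel.mk cs (g.app x) a σ)

/-- The endomorphism collection `End_{A,B}(c₁,…,cₙ;c) = Map(A c₁ × ⋯ × A cₙ, B c)`,
with the symmetric groups acting by permuting the factors of the source. -/
def endColl {C : Type u} (A B : C → Type u) : Coll C where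
  obj n cs c := (∀ i, A (cs i)) → B c
  act := fun {n} σ {cs} {c} f x =>
    f (fun i => cast (congrArg (fun j => A (cs j)) (σ.apply_symm_apply i)) (x (σ.symm i)))

/-- Functoriality of `End_{A,−}`. -/
def endMap {C : Type u} (A : C → Type u) {B B' : C → Type u} (h : ∀ c, B c → B' c) :
    CollHom (endColl A B) (endColl A B') where
  app {n cs c} f := fun x => h c (f x)
  equivariant := by intros; rfl

theorem CollHom.ext' {C : Type u} {M N : Coll C} {f g : CollHom M N}
    (h : ∀ (n : ℕ) (cs : Fin n → C) (c : C) (x : M.obj n cs c), f.app x = g.app x) :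
    f = g := by
  cases f; cases g
  congr 1
  funext n cs c x
  exact h n cs c x

/-- Forward map of the adjunction. -/
def adjFwd {C : Type u} (A : C → Type u) (M : Coll C) (B : C → Type u)
    (φ : ∀ c, CompProd M A c → B c) : CollHom M (endColl A B) where
  app {n cs c} x := fun a => φ c (Quot.mk _ ⟨n, cs, x, a⟩)
  equivariant := by
    intro n σ cs c x
    funext a
    show φ c (Quot.mk _ ⟨n, cs ∘ σ, M.act σ x, a⟩)
      = φ c (Quot.mk _ ⟨n, cs, x, fun i =>
          cast (congrArg (fun j => A (cs j)) (σ.apply_symm_apply i)) (a (σ.symm i))⟩)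
    have key : (fun i => cast (congrArg (fun j => A (cs j)) (σ.apply_symm_apply (σ i)))
        (a (σ.symm (σ i)))) = a := by
      funext i
      refine eq_of_heq ((cast_heq _ _).trans ?_)
      rw [σ.symm_apply_apply]
    have := Quot.sound (CollCompRel.mk (M := M) (A := A) cs x
      (fun i => cast (congrArg (fun j => A (cs j)) (σ.apply_symm_apply i)) (a (σ.symm i))) σ)
    conv_lhs => rw [← key]
    exact congrArg (φ c) this.symm

/-- Backward map of the adjunction. -/
def adjBwd {C : Type u} (A : C → Type u) (M : Coll C) (B : C → Type u)
    (f : CollHom M (endColl A B)) : ∀ c, CompProd M A c → B c := fun c =>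
  Quot.lift (fun p => f.app p.2.2.1 p.2.2.2) (by
    rintro _ _ ⟨cs, x, a, σ⟩
    show f.app x a = f.app (M.act σ x) (fun i => a (σ i))
    rw [f.equivariant]
    refine congrArg (f.app x) ?_
    funext i
    refine (eq_of_heq ((cast_heq _ _).trans ?_)).symm
    exact congr_arg_heq a (σ.apply_symm_apply i))

/-- `(−) ∘ A ⊣ End_{A,−}`, as a hom-set bijection
`Hom_{S^C}(M ∘ A, B) ≅ Hom_{Coll_C(S)}(M, End_{A,B})` natural in `M` and `B`. -/
theorem stmt_4 {C : Type u} (A : C → Type u) :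
    ∃ e : ∀ (M : Coll C) (B : C → Type u),
        (∀ c, CompProd M A c → B c) ≃ CollHom M (endColl A B),
      (∀ (M : Coll C) (B B' : C → Type u) (h : ∀ c, B c → B' c)
          (φ : ∀ c, CompProd M A c → B c),
          e M B' (fun c x => h c (φ c x)) = (endMap A h).comp (e M B φ)) ∧
      (∀ (M M' : Coll C) (g : CollHom M' M) (B : C → Type u)
          (φ : ∀ c, CompProd M A c → B c),
          e M' B (fun c x => φ c (compMap g A c x)) = (e M B φ).comp g) := by
  refine ⟨fun M B => ⟨adjFwd A M B, adjBwd A M B, ?_, ?_⟩, ?_, ?_⟩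
  · intro φ
    funext c x
    induction x using Quot.ind with
    | _ p => rfl
  · intro f
    exact CollHom.ext' (fun n cs c x => rfl)
  · intro M B B' h φ
    exact CollHom.ext' (fun n cs c x => rfl)
  · intro M M' g B φ
    exact CollHom.ext' (fun n cs c x => rfl)
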